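/- Let A be an n×n real symmetric positive definite matrix with positive semidefinite square root √A, and let X and Y be n×n real symmetric matrices satisfying (A⁻¹Y + YA⁻¹)/2 = X. Then Y is majorized by √A X √A. -/

import Mathlib

open Matrix

/-- `v` is majorized by `w`: for every `k`, the sum of the `k` largest entries of `v`
is at most the sum of the `k` largest entries of `w`, with equality for `k = n`.
Stated equivalently: every subset sum of `v` is dominated by some subset sum of `w`
of the same cardinality, and the total sums agree. -/
def VecMajorizedBy {ι : Type*} [Fintype ι] (v w : ι → ℝ) : Prop :=
  (∀ s : Finset ι, ∃ t : Finset ι, t.card = s.card ∧ ∑ i ∈ s, v i ≤ ∑ i ∈ t, w i) ∧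
    ∑ i, v i = ∑ i, w i

/-- `X` is majorized by `Y`: both are (real) symmetric and the eigenvalue vector of `X`
is majorized by the eigenvalue vector of `Y`. -/
def MatMajorizedBy {ι : Type*} [Fintype ι] [DecidableEq ι]
    (X Y : Matrix ι ι ℝ) : Prop :=
  ∃ (hX : X.IsHermitian) (hY : Y.IsHermitian),
    VecMajorizedBy hX.eigenvalues hY.eigenvalues

/-- The positive semidefinite square root of a positive semidefinite matrix
(the definition of `Matrix.PosSemidef.sqrt` from the older Mathlib, since removed). -/
noncomputable def Matrix.PosSemidef.sqrt {n : Type*} [Fintype n]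
    [DecidableEq n] {A : Matrix n n ℝ} (hA : A.PosSemidef) : Matrix n n ℝ :=
  hA.1.eigenvectorUnitary.1 * diagonal ((↑) ∘ (√·) ∘ hA.1.eigenvalues) *
  (star hA.1.eigenvectorUnitary : Matrix n n ℝ)

/-!
With `S = √A` and `B = S⁻¹ Y S`, the Lyapunov equation says precisely that `S X S = (B + Bᵀ)/2`
is the symmetric part of `B`, while `B` is similar to `Y`. It therefore suffices that the
eigenvalues `λ` of a matrix diagonalized by a similarity, `B N = N diag λ`, are majorized by the
eigenvalues of its symmetric part `Z`. Given a `k`-set `s` of indices, let `P` be the orthogonal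
projection onto the span of the columns `N i`, `i ∈ s`. That span is `B`-invariant, so
`tr (P Z) = tr (P B) = ∑_{i ∈ s} λ i`, and Ky Fan's maximum principle bounds `tr (P Z)` by a sum of
`k` eigenvalues of `Z`. The totals agree because `tr Z = tr B = tr Y`.
-/

open Finset
open scoped ComplexOrder

namespace Finset

variable {ι : Type*} [Fintype ι]

theorem exists_card_eq_forall_le_of_mem_of_notMem (μ : ι → ℝ) {k : ℕ} (hk : k ≤ Fintype.card ι) :
    ∃ t : Finset ι, #t = k ∧ ∀ i ∈ t, ∀ j ∉ t, μ j ≤ μ i := by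
  classical
  have hne : (univ.powersetCard k : Finset (Finset ι)).Nonempty :=
    powersetCard_nonempty.mpr (by simpa using hk)
  obtain ⟨t, ht, hmax⟩ := exists_max_image _ (fun t => ∑ i ∈ t, μ i) hne
  have htk : #t = k := (mem_powersetCard.mp ht).2
  refine ⟨t, htk, fun i hi j hj => ?_⟩
  have hj' : j ∉ t.erase i := fun h => hj (mem_of_mem_erase h)
  have hswap : insert j (t.erase i) ∈ univ.powersetCard k := by
    rw [mem_powersetCard, card_insert_of_notMem hj', card_erase_of_mem hi, htk]
    exact ⟨subset_univ _, Nat.sub_add_cancel (htk ▸ card_pos.mpr ⟨i, hi⟩)⟩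
  have := hmax _ hswap
  rw [sum_insert hj', ← add_sum_erase t μ hi] at this
  linarith

theorem exists_card_eq_sum_mul_le_sum (μ c : ι → ℝ) {k : ℕ} (hc0 : ∀ j, 0 ≤ c j)
    (hc1 : ∀ j, c j ≤ 1) (hsum : ∑ j, c j = k) :
    ∃ t : Finset ι, #t = k ∧ ∑ j, μ j * c j ≤ ∑ i ∈ t, μ i := by
  classical
  have hk : k ≤ Fintype.card ι := by
    have : (k : ℝ) ≤ Fintype.card ι := by
      simpa [← hsum] using sum_le_sum fun j (_ : j ∈ univ) => hc1 j
    exact_mod_cast this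
  obtain ⟨t, htk, hsep⟩ := exists_card_eq_forall_le_of_mem_of_notMem μ hk
  refine ⟨t, htk, ?_⟩
  rcases t.eq_empty_or_nonempty with rfl | ht
  · have hc : ∀ j, c j = 0 := fun j =>
      (sum_eq_zero_iff_of_nonneg fun i _ => hc0 i).mp (by simp [hsum, ← htk]) j (mem_univ j)
    simp [hc]
  set m := t.inf' ht μ
  -- every term of `∑ (μ j - m) * (c j - 𝟙_t j)` is `≤ 0`, and `∑ (c j - 𝟙_t j) = 0`
  have hterm : ∀ j, (μ j - m) * (c j - if j ∈ t then 1 else 0) ≤ 0 := by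
    intro j
    by_cases hj : j ∈ t
    · simp only [hj, if_true]
      exact mul_nonpos_of_nonneg_of_nonpos (sub_nonneg.mpr (inf'_le μ hj))
        (by linarith [hc1 j])
    · simp only [hj, if_false, sub_zero]
      exact mul_nonpos_of_nonpos_of_nonneg
        (sub_nonpos.mpr (le_inf' ht μ fun i hi => hsep i hi j hj)) (hc0 j)
  have hind : ∑ j : ι, (if j ∈ t then (1 : ℝ) else 0) = k := by simp [htk]
  have hμind : ∑ j : ι, μ j * (if j ∈ t then (1 : ℝ) else 0) = ∑ i ∈ t, μ i := by
    simp [mul_ite]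
  have := sum_nonpos fun j (_ : j ∈ univ) => hterm j
  simp only [sub_mul, mul_sub, sum_sub_distrib, ← mul_sum, hsum, hind, hμind] at this
  linarith

end Finset

namespace Matrix

variable {ι : Type*} [Fintype ι]

lemma IsStarProjection.posSemidef {𝕜 : Type*} [RCLike 𝕜] {P : Matrix ι ι 𝕜}
    (hP : IsStarProjection P) :
    P.PosSemidef := by
  have h : Pᴴ * P = P := by
    rw [← star_eq_conjTranspose, hP.isSelfAdjoint.star_eq, hP.isIdempotentElem.eq]
  exact h ▸ posSemidef_conjTranspose_mul_self P

lemma trace_mul_selfAdjointPart {P : Matrix ι ι ℝ} (hP : IsSelfAdjoint P) (B : Matrix ι ι ℝ) :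
    (P * (selfAdjointPart ℝ B : Matrix ι ι ℝ)).trace = (P * B).trace := by
  have h : (P * star B).trace = (P * B).trace := by
    rw [← hP.star_eq, ← star_mul, star_eq_conjTranspose, trace_conjTranspose, star_trivial,
      trace_mul_comm, hP.star_eq]
  rw [selfAdjointPart_apply_coe, invOf_eq_inv, Matrix.mul_smul, trace_smul, Matrix.mul_add,
    trace_add, h, smul_eq_mul]
  ring

section colProj

variable {κ 𝕜 : Type*} [Fintype κ] [DecidableEq κ] [RCLike 𝕜]

/-- The orthogonal projection onto the column space of `W`, when `W` has independent columns. -/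
noncomputable def colProj (W : Matrix ι κ 𝕜) : Matrix ι ι 𝕜 := W * (Wᴴ * W)⁻¹ * Wᴴ

variable {W : Matrix ι κ 𝕜}

lemma isUnit_det_conjTranspose_mul_self (hW : Function.Injective W.mulVec) :
    IsUnit (Wᴴ * W).det :=
  (isUnit_iff_isUnit_det _).mp (PosDef.conjTranspose_mul_self W hW).isUnit

lemma isStarProjection_colProj (hW : Function.Injective W.mulVec) :
    IsStarProjection (colProj W) := by
  refine ⟨?_, ?_⟩
  · change colProj W * colProj W = colProj W
    simp only [colProj, Matrix.mul_assoc]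
    rw [← Matrix.mul_assoc Wᴴ W, ← Matrix.mul_assoc _ (Wᴴ * W),
      nonsing_inv_mul _ (isUnit_det_conjTranspose_mul_self hW), Matrix.one_mul]
  · rw [IsSelfAdjoint, star_eq_conjTranspose, colProj, conjTranspose_mul, conjTranspose_mul,
      conjTranspose_conjTranspose, conjTranspose_nonsing_inv,
      (isHermitian_conjTranspose_mul_self W).eq, Matrix.mul_assoc]

lemma trace_colProj (hW : Function.Injective W.mulVec) : (colProj W).trace = Fintype.card κ := by
  rw [colProj, trace_mul_cycle, mul_nonsing_inv _ (isUnit_det_conjTranspose_mul_self hW),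
    trace_one]

lemma trace_colProj_mul_of_mul_eq (hW : Function.Injective W.mulVec) {B : Matrix ι ι 𝕜}
    {D : Matrix κ κ 𝕜} (hBW : B * W = W * D) :
    (colProj W * B).trace = D.trace := by
  have h : colProj W * B = W * ((Wᴴ * W)⁻¹ * Wᴴ * B) := by simp only [colProj, Matrix.mul_assoc]
  rw [h, trace_mul_comm]
  simp only [Matrix.mul_assoc]
  rw [hBW, ← Matrix.mul_assoc Wᴴ, ← Matrix.mul_assoc,
    nonsing_inv_mul _ (isUnit_det_conjTranspose_mul_self hW), Matrix.one_mul]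

end colProj

variable [DecidableEq ι]

lemma IsHermitian.eq_eigenvectorUnitary_mul_diagonal_mul_star {Z : Matrix ι ι ℝ}
    (hZ : Z.IsHermitian) :
    Z = hZ.eigenvectorUnitary * diagonal hZ.eigenvalues *
      star (hZ.eigenvectorUnitary : Matrix ι ι ℝ) := by
  simpa [RCLike.ofReal_real_eq_id] using hZ.spectral_theorem

lemma IsHermitian.mul_eigenvectorUnitary {Z : Matrix ι ι ℝ} (hZ : Z.IsHermitian) :
    Z * hZ.eigenvectorUnitary = hZ.eigenvectorUnitary * diagonal hZ.eigenvalues := by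
  conv_lhs => arg 1; rw [hZ.eq_eigenvectorUnitary_mul_diagonal_mul_star]
  simp [Matrix.mul_assoc]

/-- Ky Fan's maximum principle. -/
theorem IsHermitian.exists_card_eq_trace_mul_le {Z P : Matrix ι ι ℝ} (hZ : Z.IsHermitian)
    (hP : IsStarProjection P) {k : ℕ} (hk : P.trace = k) :
    ∃ t : Finset ι, #t = k ∧ (P * Z).trace ≤ ∑ i ∈ t, hZ.eigenvalues i := by
  set U : Matrix ι ι ℝ := (hZ.eigenvectorUnitary : Matrix ι ι ℝ)
  have hUU : star U * U = 1 := Unitary.coe_star_mul_self _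
  have hUU' : U * star U = 1 := Unitary.coe_mul_star_self _
  set c : ι → ℝ := fun j => (star U * P * U) j j
  have hc0 : ∀ j, 0 ≤ c j := fun j => (hP.posSemidef.conjTranspose_mul_mul_same U).diag_nonneg
  have hc1 : ∀ j, c j ≤ 1 := by
    intro j
    have := (hP.one_sub.posSemidef.conjTranspose_mul_mul_same U).diag_nonneg (i := j)
    rw [← star_eq_conjTranspose, Matrix.mul_sub, Matrix.sub_mul, Matrix.mul_one, hUU,
      sub_apply, one_apply_eq, sub_nonneg] at this
    exact this
  have hsum : ∑ j, c j = k := by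
    rw [← hk]
    change (star U * P * U).trace = _
    rw [trace_mul_cycle, hUU', Matrix.one_mul]
  have htrace : (P * Z).trace = ∑ j, hZ.eigenvalues j * c j := by
    conv_lhs => rw [hZ.eq_eigenvectorUnitary_mul_diagonal_mul_star]
    rw [← Matrix.mul_assoc, ← Matrix.mul_assoc, trace_mul_comm, ← Matrix.mul_assoc,
      ← Matrix.mul_assoc]
    simp [trace, mul_diagonal, c, U, mul_comm]
  rw [htrace]
  exact exists_card_eq_sum_mul_le_sum _ c hc0 hc1 hsum

theorem exists_card_eq_sum_le_sum_eigenvalues_selfAdjointPart {B N : Matrix ι ι ℝ}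
    {lam : ι → ℝ} (hN : IsUnit N.det) (hBN : B * N = N * diagonal lam)
    (hZ : (selfAdjointPart ℝ B : Matrix ι ι ℝ).IsHermitian) (s : Finset ι) :
    ∃ t : Finset ι, #t = #s ∧ ∑ i ∈ s, lam i ≤ ∑ i ∈ t, hZ.eigenvalues i := by
  set W : Matrix ι s ℝ := N.submatrix id (↑)
  have hW : Function.Injective W.mulVec := by
    set L : Matrix s ι ℝ := N⁻¹.submatrix (↑) id
    have hLW : L * W = 1 := by
      simp only [L, W]
      rw [← submatrix_mul _ _ _ id _ Function.bijective_id, nonsing_inv_mul _ hN,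
        submatrix_one _ Subtype.val_injective]
    intro x y hxy
    simpa [mulVec_mulVec, hLW] using congrArg (L *ᵥ ·) hxy
  have hBW : B * W = W * diagonal (fun i : s => lam i) := by
    have h : B * W = (B * N).submatrix id (↑) := by ext; simp [W, mul_apply]
    rw [h, hBN]
    ext; simp [W, mul_diagonal]
  have hP := isStarProjection_colProj hW
  obtain ⟨t, ht, hle⟩ := hZ.exists_card_eq_trace_mul_le hP
    (by rw [trace_colProj hW, Fintype.card_coe])
  refine ⟨t, ht, ?_⟩
  rwa [trace_mul_selfAdjointPart hP.isSelfAdjoint, trace_colProj_mul_of_mul_eq hW hBW,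
    trace_diagonal, sum_coe_sort s lam] at hle

theorem IsHermitian.matMajorizedBy_selfAdjointPart_conj {Y S : Matrix ι ι ℝ}
    (hY : Y.IsHermitian) (hS : IsUnit S.det) :
    MatMajorizedBy Y (selfAdjointPart ℝ (S⁻¹ * Y * S) : Matrix ι ι ℝ) := by
  set B := S⁻¹ * Y * S
  have hZ : (selfAdjointPart ℝ B : Matrix ι ι ℝ).IsHermitian := (selfAdjointPart ℝ B).2
  set U : Matrix ι ι ℝ := (hY.eigenvectorUnitary : Matrix ι ι ℝ)
  have hN : IsUnit (S⁻¹ * U).det := by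
    rw [det_mul]
    exact (isUnit_nonsing_inv_det S hS).mul (UnitaryGroup.det_isUnit _)
  have hBN : B * (S⁻¹ * U) = S⁻¹ * U * diagonal hY.eigenvalues := by
    simp only [B, Matrix.mul_assoc]
    rw [← Matrix.mul_assoc S, mul_nonsing_inv S hS, Matrix.one_mul, hY.mul_eigenvectorUnitary]
  have htrace : (selfAdjointPart ℝ B : Matrix ι ι ℝ).trace = Y.trace := by
    simpa [B, trace_mul_cycle, mul_nonsing_inv S hS] using
      trace_mul_selfAdjointPart (.one _) B
  refine ⟨hY, hZ, exists_card_eq_sum_le_sum_eigenvalues_selfAdjointPart hN hBN hZ, ?_⟩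
  simpa only [hY.trace_eq_sum_eigenvalues, hZ.trace_eq_sum_eigenvalues,
    RCLike.ofReal_real_eq_id, id] using htrace.symm

lemma PosSemidef.isHermitian_sqrt {A : Matrix ι ι ℝ} (hA : A.PosSemidef) :
    hA.sqrt.IsHermitian := by
  simp [IsHermitian, sqrt, Matrix.mul_assoc, star_eq_conjTranspose,
    conjTranspose_eq_transpose_of_trivial]

lemma PosSemidef.sqrt_mul_sqrt {A : Matrix ι ι ℝ} (hA : A.PosSemidef) :
    hA.sqrt * hA.sqrt = A := by
  simp only [sqrt, Matrix.mul_assoc]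
  rw [← Matrix.mul_assoc (star _), Unitary.coe_star_mul_self, Matrix.one_mul,
    ← Matrix.mul_assoc (diagonal _), diagonal_mul_diagonal]
  conv_rhs => rw [hA.1.eq_eigenvectorUnitary_mul_diagonal_mul_star]
  simp [Matrix.mul_assoc, Real.mul_self_sqrt (hA.eigenvalues_nonneg _)]

lemma conj_lyapunov_eq_selfAdjointPart {S Y : Matrix ι ι ℝ} (hS : S.IsHermitian)
    (hSu : IsUnit S.det) (hY : Y.IsHermitian) :
    S * ((2 : ℝ)⁻¹ • ((S * S)⁻¹ * Y + Y * (S * S)⁻¹)) * S =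
      selfAdjointPart ℝ (S⁻¹ * Y * S) := by
  rw [selfAdjointPart_apply_coe, invOf_eq_inv, Matrix.mul_smul, Matrix.smul_mul]
  congr 1
  rw [star_eq_conjTranspose, conjTranspose_mul, conjTranspose_mul, conjTranspose_nonsing_inv,
    hS.eq, hY.eq, Matrix.mul_inv_rev]
  simp only [Matrix.mul_add, Matrix.add_mul, Matrix.mul_assoc,
    mul_nonsing_inv_cancel_left _ _ hSu, nonsing_inv_mul _ hSu, Matrix.mul_one]

end Matrix

theorem lyapunovInv_majorized_sqrt_quadratic_general {n : ℕ}
    (A X Y : Matrix (Fin n) (Fin n) ℝ) (hA : A.PosDef)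
    (hY : Y.IsHermitian)
    (heq : (2 : ℝ)⁻¹ • (A⁻¹ * Y + Y * A⁻¹) = X) :
    MatMajorizedBy Y (Matrix.PosSemidef.sqrt hA.posSemidef * X * Matrix.PosSemidef.sqrt hA.posSemidef) := by
  set S := hA.posSemidef.sqrt
  have hSS : S * S = A := hA.posSemidef.sqrt_mul_sqrt
  have hSu : IsUnit S.det := by
    have h : S.det * S.det = A.det := by rw [← det_mul, hSS]
    exact (IsUnit.mul_iff.mp (h ▸ hA.det_pos.ne'.isUnit)).1
  rw [← heq, ← hSS, conj_lyapunov_eq_selfAdjointPart hA.posSemidef.isHermitian_sqrt hSu hY]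
  exact hY.matMajorizedBy_selfAdjointPart_conj hSu

/-- Harmonic–geometric mean majorization: if `A` is real symmetric positive definite and
`Y` solves the Lyapunov equation `(A⁻¹Y + YA⁻¹)/2 = X` with `X`, `Y` symmetric, then
`Y` is majorized by `√A * X * √A`. -/
theorem lyapunovInv_majorized_sqrt_quadratic {n : ℕ}
    (A X Y : Matrix (Fin n) (Fin n) ℝ) (hA : A.PosDef)
    (hX : X.IsHermitian) (hY : Y.IsHermitian)
    (heq : (2 : ℝ)⁻¹ • (A⁻¹ * Y + Y * A⁻¹) = X) :
    MatMajorizedBy Y (Matrix.PosSemidef.sqrt hA.posSemidef * X * Matrix.PosSemidef.sqrt hA.posSemidef) :=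
  lyapunovInv_majorized_sqrt_quadratic_general A X Y hA hY heq
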